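/- Uniform B-robustness of reweighted posteriors with Gamma weights: Let 𝒳 ⊆ ℝ^d, Θ ⊆ ℝ^p, and let the likelihood be f(x|θ) = exp(−g(x,θ)) where g: 𝒳×Θ→(0,∞) is differentiable in θ and the map θ ↦ log g(x,θ) is L-Lipschitz for every x ∈ 𝒳. Let κ, λ > 0 and define the reweighted posterior π_α(θ|F_n) ∝ π(θ) ∏_{i=1}^n (λ + g(X_i,θ))^{−κ}, which coincides with the M-posterior for the loss ρ(x,θ) = κ[log(λ + g(x,θ)) − log λ]; its score satisfies ‖∇_θ ρ(x,θ)‖ = κ‖∇_θ g(x,θ)‖/(λ + g(x,θ)) ≤ κL for all x, θ. If π is an upper-bounded prior with finite first moment (∫‖θ‖π(θ)dθ < ∞) such that sup_{θ∈Θ} π(θ)‖θ‖ < ∞, and the posterior is well defined, then π_α(·|F_n) is uniformly B-robust: sup_{θ∈Θ} sup_{x_0∈𝒳} |PIF(x_0; θ, ρ, F_n)| < ∞. -/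

import Mathlib

/-!
The score of `ρ = κ (log (λ + g) - log λ)` is `κ ∇g / (λ + g)`, and `‖∇g‖ ≤ L g` because `log g`
is `L`-Lipschitz, so the score is bounded by `κ L` and every `ρ(x, ·)` is `κ L`-Lipschitz.

With `F = π e^{-Σᵢ ρ(Xᵢ, ·)}` and `h = Σᵢ (ρ(Xᵢ, ·) - ρ(x₀, ·))`, the contaminated posterior is the
exponential tilt `F(θ) e^{ε h(θ)} / ∫ F e^{ε h}`. Dominated convergence, with integrability at
`ε = 1` as the dominating bound, gives the right derivative at `ε = 0`:
`F(θ) ∫ (h(θ) - h(t)) F(t) dt / (∫ F)²`. As `h` is `2 n κ L`-Lipschitz,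
`|h(θ) - h(t)| ≤ 2 n κ L (‖θ‖ + ‖t‖)`, so the influence is at most
`2 n κ L (F(θ) ‖θ‖ ∫ F + F(θ) ∫ ‖t‖ F(t) dt) / (∫ F)²`, which the bounds on `π` and `π ‖θ‖` and the
finite first moment make uniform in `θ` and `x₀`.
-/

open MeasureTheory

/-- Unnormalized density of the `ε`-contaminated M-posterior at contamination point `x₀`. -/
noncomputable def contamNum {d p n : ℕ} (w : EuclideanSpace ℝ (Fin p) → ℝ)
    (ρ : EuclideanSpace ℝ (Fin d) → EuclideanSpace ℝ (Fin p) → ℝ)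
    (X : Fin n → EuclideanSpace ℝ (Fin d)) (x₀ : EuclideanSpace ℝ (Fin d)) (ε : ℝ)
    (θ : EuclideanSpace ℝ (Fin p)) : ℝ :=
  w θ * Real.exp (-((1 - ε) * ∑ i, ρ (X i) θ + ε * n * ρ x₀ θ))

/-- Density of the `ε`-contaminated M-posterior `π_n^ρ(θ | F_{n,ε,x₀})`; at `ε = 0` this is the
M-posterior `π_n^ρ(θ | F_n)`. -/
noncomputable def contamPost {d p n : ℕ} (Θ : Set (EuclideanSpace ℝ (Fin p)))
    (w : EuclideanSpace ℝ (Fin p) → ℝ)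
    (ρ : EuclideanSpace ℝ (Fin d) → EuclideanSpace ℝ (Fin p) → ℝ)
    (X : Fin n → EuclideanSpace ℝ (Fin d)) (x₀ : EuclideanSpace ℝ (Fin d)) (ε : ℝ)
    (θ : EuclideanSpace ℝ (Fin p)) : ℝ :=
  contamNum w ρ X x₀ ε θ / ∫ t in Θ, contamNum w ρ X x₀ ε t

/-- The loss of the reweighted posterior with `Γ(κ,λ)` weights for the model
`f(x|θ) = exp(−g(x,θ))`: `ρ(x,θ) = κ[log(λ + g(x,θ)) − log λ]`. -/
noncomputable def reweightedLoss {d p : ℕ} (κ lam : ℝ)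
    (g : EuclideanSpace ℝ (Fin d) → EuclideanSpace ℝ (Fin p) → ℝ)
    (x : EuclideanSpace ℝ (Fin d)) (θ : EuclideanSpace ℝ (Fin p)) : ℝ :=
  κ * (Real.log (lam + g x θ) - Real.log lam)

open Real Set Filter Topology
open scoped NNReal

theorem abs_exp_mul_sub_one_le {ε δ : ℝ} (x : ℝ) (hε : 0 ≤ ε) (hεδ : ε ≤ δ) :
    |exp (ε * x) - 1| ≤ ε * |x| * (1 + exp (δ * x)) := by
  rcases le_or_gt 0 x with hx | hx
  · have hmono : exp (ε * x) ≤ exp (δ * x) := exp_le_exp.2 (by nlinarith)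
    have hsub_one_le : exp (ε * x) - 1 ≤ ε * x * exp (ε * x) := by
      have h1 := add_one_le_exp (-(ε * x))
      have h2 : exp (-(ε * x)) * exp (ε * x) = 1 := by rw [← exp_add]; simp
      nlinarith [mul_le_mul_of_nonneg_right h1 (exp_pos (ε * x)).le]
    rw [abs_of_nonneg (sub_nonneg.2 (one_le_exp (by positivity))), abs_of_nonneg hx]
    nlinarith [mul_le_mul_of_nonneg_left hmono (mul_nonneg hε hx)]
  · have h1 := add_one_le_exp (ε * x)
    rw [abs_of_nonpos (sub_nonpos.2 (exp_le_one_iff.2 (by nlinarith))), abs_of_neg hx]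
    nlinarith [exp_pos (δ * x), mul_nonneg hε (neg_nonneg.2 hx.le)]

theorem LipschitzWith.finset_sum {ι α β : Type*} [PseudoEMetricSpace α] [SeminormedAddCommGroup β]
    {s : Finset ι} {f : ι → α → β} {K : ι → ℝ≥0} (hf : ∀ i ∈ s, LipschitzWith (K i) (f i)) :
    LipschitzWith (∑ i ∈ s, K i) fun x => ∑ i ∈ s, f i x := by
  classical
  induction s using Finset.induction_on with
  | empty => simpa using LipschitzWith.const (0 : β)
  | insert i s hi ih =>
    simp only [Finset.sum_insert hi]
    exact (hf i (Finset.mem_insert_self i s)).add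
      (ih fun j hj => hf j (Finset.mem_insert_of_mem hj))

theorem hasDerivWithinAt_integral_mul_exp {α : Type*} [MeasurableSpace α] {μ : Measure α}
    {F h : α → ℝ} {δ : ℝ} (hδ : 0 < δ) (hF : ∀ t, 0 ≤ F t) (hFi : Integrable F μ)
    (hεi : ∀ ε ∈ Ioc 0 δ, Integrable (fun t => F t * exp (ε * h t)) μ)
    (hdom : Integrable (fun t => h t * (F t + F t * exp (δ * h t))) μ) :
    HasDerivWithinAt (fun ε => ∫ t, F t * exp (ε * h t) ∂μ) (∫ t, h t * F t ∂μ) (Ici 0) 0 := by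
  refine hasDerivWithinAt_Ioi_iff_Ici.mp ?_
  rw [hasDerivWithinAt_iff_tendsto_slope' (by simp)]
  have hIoc : Ioc 0 δ ∈ 𝓝[>] (0 : ℝ) := Ioc_mem_nhdsGT hδ
  have hslope : ∀ ε ∈ Ioc 0 δ, slope (fun ε => ∫ t, F t * exp (ε * h t) ∂μ) 0 ε
      = ∫ t, ε⁻¹ * (F t * exp (ε * h t) - F t) ∂μ := fun ε hε => by
    simp only [slope_def_field, zero_mul, exp_zero, mul_one, sub_zero]
    rw [integral_const_mul, integral_sub (hεi ε hε) hFi, div_eq_inv_mul]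
  refine (tendsto_integral_filter_of_dominated_convergence
    (F := fun ε t => ε⁻¹ * (F t * exp (ε * h t) - F t)) _ ?_ ?_ hdom.norm ?_).congr' ?_
  · filter_upwards [hIoc] with ε hε
    exact (((hεi ε hε).sub hFi).const_mul ε⁻¹).aestronglyMeasurable
  · filter_upwards [hIoc] with ε hε
    refine ae_of_all _ fun t => ?_
    have hbound := mul_le_mul_of_nonneg_left (abs_exp_mul_sub_one_le (h t) hε.1.le hε.2) (hF t)
    rw [norm_mul, norm_mul, Real.norm_of_nonneg (inv_nonneg.2 hε.1.le), Real.norm_eq_abs,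
      Real.norm_eq_abs, ← mul_sub_one, abs_mul, abs_of_nonneg (hF t),
      Real.norm_of_nonneg (add_nonneg (hF t) (mul_nonneg (hF t) (exp_pos _).le)),
      inv_mul_le_iff₀ hε.1]
    nlinarith
  · refine ae_of_all _ fun t => ?_
    have hderiv : HasDerivAt (fun ε => F t * exp (ε * h t)) (h t * F t) 0 := by
      have := ((hasDerivAt_mul_const (x := (0 : ℝ)) (h t)).exp).const_mul (F t)
      simpa [mul_comm] using this
    simpa using hderiv.tendsto_slope_zero_right
  · filter_upwards [hIoc] with ε hε
    exact (hslope ε hε).symm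

theorem hasDerivWithinAt_mul_exp_div_integral {α : Type*} [MeasurableSpace α] {μ : Measure α}
    {F h : α → ℝ} {δ : ℝ} (θ : α) (hδ : 0 < δ) (hF : ∀ t, 0 ≤ F t) (hFi : Integrable F μ)
    (hFpos : 0 < ∫ t, F t ∂μ)
    (hεi : ∀ ε ∈ Ioc 0 δ, Integrable (fun t => F t * exp (ε * h t)) μ)
    (hdom : Integrable (fun t => h t * (F t + F t * exp (δ * h t))) μ) :
    HasDerivWithinAt (fun ε => F θ * exp (ε * h θ) / ∫ t, F t * exp (ε * h t) ∂μ)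
      (F θ * (h θ * ∫ t, F t ∂μ - ∫ t, h t * F t ∂μ) / (∫ t, F t ∂μ) ^ 2) (Ici 0) 0 := by
  have hnum : HasDerivAt (fun ε => F θ * exp (ε * h θ)) (F θ * h θ) 0 := by
    simpa using ((hasDerivAt_mul_const (x := (0 : ℝ)) (h θ)).exp).const_mul (F θ)
  have hden := hasDerivWithinAt_integral_mul_exp hδ hF hFi hεi hdom
  refine (hnum.hasDerivWithinAt.div hden (by simpa using hFpos.ne')).congr_deriv ?_
  simp only [zero_mul, exp_zero, mul_one]
  ring

section ExponentialTilt

variable {E : Type*} [NormedAddCommGroup E] [MeasurableSpace E] [OpensMeasurableSpace E]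
  {μ : Measure E} {F h : E → ℝ} {K : ℝ≥0}

theorem LipschitzWith.integrable_mul (hh : LipschitzWith K h) {G : E → ℝ} (hG : Integrable G μ)
    (hnG : Integrable (fun t => ‖t‖ * G t) μ) : Integrable (fun t => h t * G t) μ := by
  refine ((hG.norm.const_mul |h 0|).add (hnG.norm.const_mul K)).mono'
    (hh.continuous.aestronglyMeasurable.mul hG.1) (ae_of_all _ fun t => ?_)
  have hgrowth : |h t| ≤ |h 0| + K * ‖t‖ := by
    have := hh.dist_le_mul t 0
    rw [Real.dist_eq, dist_zero_right] at this
    linarith [abs_sub_abs_le_abs_sub (h t) (h 0)]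
  simp only [Pi.add_apply, norm_mul, Real.norm_eq_abs, abs_norm]
  nlinarith [mul_le_mul_of_nonneg_right hgrowth (abs_nonneg (G t))]

theorem LipschitzWith.abs_mul_integral_sub_integral_mul_le (hh : LipschitzWith K h)
    (hF : ∀ t, 0 ≤ F t) (hFi : Integrable F μ) (hnF : Integrable (fun t => ‖t‖ * F t) μ) (θ : E) :
    |h θ * ∫ t, F t ∂μ - ∫ t, h t * F t ∂μ| ≤ K * (‖θ‖ * ∫ t, F t ∂μ + ∫ t, ‖t‖ * F t ∂μ) := by
  have hsplit : h θ * ∫ t, F t ∂μ - ∫ t, h t * F t ∂μ = ∫ t, (h θ - h t) * F t ∂μ := by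
    rw [← integral_const_mul, ← integral_sub (hFi.const_mul _) (hh.integrable_mul hFi hnF)]
    simp only [sub_mul]
  have hmajor : Integrable (fun t => K * (‖θ‖ * F t + ‖t‖ * F t)) μ :=
    ((hFi.const_mul _).add hnF).const_mul _
  rw [hsplit, ← Real.norm_eq_abs]
  calc ‖∫ t, (h θ - h t) * F t ∂μ‖ ≤ ∫ t, K * (‖θ‖ * F t + ‖t‖ * F t) ∂μ :=
        norm_integral_le_of_norm_le hmajor (ae_of_all _ fun t => ?_)
    _ = K * (‖θ‖ * ∫ t, F t ∂μ + ∫ t, ‖t‖ * F t ∂μ) := by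
        rw [integral_const_mul, integral_add (hFi.const_mul _) hnF, integral_const_mul]
  have hlip : |h θ - h t| ≤ K * (‖θ‖ + ‖t‖) := by
    have := hh.dist_le_mul θ t
    rw [Real.dist_eq, dist_eq_norm] at this
    exact this.trans (mul_le_mul_of_nonneg_left (_root_.norm_sub_le θ t) K.coe_nonneg)
  rw [norm_mul, Real.norm_eq_abs, Real.norm_of_nonneg (hF t)]
  nlinarith [mul_le_mul_of_nonneg_right hlip (hF t)]

theorem LipschitzWith.exists_hasDerivWithinAt_mul_exp_div_integral_abs_le
    (hh : LipschitzWith K h) (θ : E) (hF : ∀ t, 0 ≤ F t) (hFi : Integrable F μ)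
    (hFpos : 0 < ∫ t, F t ∂μ)
    (hεi : ∀ ε ∈ Ioc (0 : ℝ) 1, Integrable (fun t => F t * exp (ε * h t)) μ)
    (hnF : Integrable (fun t => ‖t‖ * F t) μ)
    (hnF₁ : Integrable (fun t => ‖t‖ * (F t * exp (h t))) μ)
    {M M' : ℝ} (hM : F θ ≤ M) (hM' : F θ * ‖θ‖ ≤ M') :
    ∃ pif, HasDerivWithinAt (fun ε => F θ * exp (ε * h θ) / ∫ t, F t * exp (ε * h t) ∂μ)
        pif (Ici 0) 0 ∧
      |pif| ≤ K * (M' * ∫ t, F t ∂μ + M * ∫ t, ‖t‖ * F t ∂μ) / (∫ t, F t ∂μ) ^ 2 := by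
  have hF₁ : Integrable (fun t => F t * exp (h t)) μ := by
    simpa using hεi 1 ⟨one_pos, le_rfl⟩
  have hdom : Integrable (fun t => h t * (F t + F t * exp (1 * h t))) μ := by
    simp only [one_mul]
    refine hh.integrable_mul (hFi.add hF₁) ?_
    simp only [mul_add]
    exact hnF.add hnF₁
  refine ⟨_, hasDerivWithinAt_mul_exp_div_integral θ one_pos hF hFi hFpos hεi hdom, ?_⟩
  set D := ∫ t, F t ∂μ
  set I := ∫ t, ‖t‖ * F t ∂μ
  have hI : 0 ≤ I := integral_nonneg fun t => mul_nonneg (norm_nonneg t) (hF t)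
  have hFθ : F θ * (‖θ‖ * D + I) ≤ M' * D + M * I := by
    nlinarith [mul_le_mul_of_nonneg_right hM' hFpos.le, mul_le_mul_of_nonneg_right hM hI]
  rw [abs_div, abs_mul, abs_of_nonneg (hF θ), abs_of_pos (pow_pos hFpos 2)]
  gcongr ?_ / _
  calc F θ * |h θ * D - ∫ t, h t * F t ∂μ| ≤ F θ * (K * (‖θ‖ * D + I)) :=
        mul_le_mul_of_nonneg_left (hh.abs_mul_integral_sub_integral_mul_le hF hFi hnF θ) (hF θ)
    _ = K * (F θ * (‖θ‖ * D + I)) := by ring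
    _ ≤ K * (M' * D + M * I) := mul_le_mul_of_nonneg_left hFθ K.coe_nonneg

end ExponentialTilt

section Score

variable {E : Type*} [NormedAddCommGroup E] [InnerProductSpace ℝ E] [CompleteSpace E]
  {f : E → ℝ} {G θ : E}

theorem HasGradientAt.const_mul_log_const_add_sub_log (hf : HasGradientAt f G θ) {c : ℝ}
    (hc : 0 < c + f θ) (κ : ℝ) :
    HasGradientAt (fun t => κ * (log (c + f t) - log c)) ((κ / (c + f θ)) • G) θ := by
  rw [hasGradientAt_iff_hasFDerivAt] at hf ⊢
  refine ((((hf.const_add c).log hc.ne').sub_const (log c)).const_mul κ).congr_fderiv ?_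
  rw [map_smul, smul_smul, div_eq_mul_inv]

theorem HasGradientAt.norm_le_mul_of_lipschitzWith_log (hf : HasGradientAt f G θ)
    (hpos : 0 < f θ) {L : ℝ≥0} (hL : LipschitzWith L fun t => log (f t)) : ‖G‖ ≤ L * f θ := by
  have := ((hasGradientAt_iff_hasFDerivAt.mp hf).log hpos.ne').le_of_lipschitz hL
  rw [norm_smul, LinearIsometryEquiv.norm_map, norm_inv, Real.norm_of_nonneg hpos.le,
    inv_mul_le_iff₀ hpos] at this
  linarith

theorem HasGradientAt.norm_div_const_add_smul_le (hf : HasGradientAt f G θ) (hpos : 0 < f θ)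
    {L : ℝ≥0} (hL : LipschitzWith L fun t => log (f t)) {c κ : ℝ} (hc : 0 ≤ c) (hκ : 0 ≤ κ) :
    ‖(κ / (c + f θ)) • G‖ ≤ κ * L := by
  have hG := hf.norm_le_mul_of_lipschitzWith_log hpos hL
  rw [norm_smul, Real.norm_of_nonneg (by positivity), div_mul_eq_mul_div,
    div_le_iff₀ (by positivity)]
  nlinarith [mul_le_mul_of_nonneg_left hG hκ, mul_nonneg (mul_nonneg hκ L.coe_nonneg) hc]

theorem lipschitzWith_of_hasGradientAt_of_norm_le {f' : E → E} {C : ℝ≥0}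
    (hf : ∀ x, HasGradientAt f (f' x) x) (bound : ∀ x, ‖f' x‖ ≤ C) : LipschitzWith C f := by
  rw [← lipschitzOnWith_univ]
  refine convex_univ.lipschitzOnWith_of_nnnorm_hasFDerivWithin_le
    (fun x _ => (hasGradientAt_iff_hasFDerivAt.mp (hf x)).hasFDerivWithinAt) fun x _ => ?_
  rw [← NNReal.coe_le_coe, coe_nnnorm, LinearIsometryEquiv.norm_map]
  exact bound x

end Score

section ContaminatedPosterior

variable {d p n : ℕ} (w : EuclideanSpace ℝ (Fin p) → ℝ)
  (ρ : EuclideanSpace ℝ (Fin d) → EuclideanSpace ℝ (Fin p) → ℝ)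
  (X : Fin n → EuclideanSpace ℝ (Fin d)) (x₀ : EuclideanSpace ℝ (Fin d))

theorem contamNum_eq_mul_exp (ε : ℝ) (θ : EuclideanSpace ℝ (Fin p)) :
    contamNum w ρ X x₀ ε θ
      = w θ * exp (-∑ i, ρ (X i) θ) * exp (ε * ∑ i, (ρ (X i) θ - ρ x₀ θ)) := by
  rw [contamNum, mul_assoc (w θ), ← exp_add, Finset.sum_sub_distrib, Finset.sum_const,
    Finset.card_univ, Fintype.card_fin, nsmul_eq_mul]
  ring_nf

variable {w ρ}

theorem contamNum_le {θ : EuclideanSpace ℝ (Fin p)} (hw : 0 ≤ w θ) (hρ : ∀ x, 0 ≤ ρ x θ)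
    {ε : ℝ} (hε : ε ∈ Icc (0 : ℝ) 1) : contamNum w ρ X x₀ ε θ ≤ w θ := by
  refine mul_le_of_le_one_right hw (exp_le_one_iff.2 (neg_nonpos.2 (add_nonneg ?_ ?_)))
  · exact mul_nonneg (sub_nonneg.2 hε.2) (Finset.sum_nonneg fun i _ => hρ (X i))
  · exact mul_nonneg (mul_nonneg hε.1 n.cast_nonneg) (hρ x₀)

end ContaminatedPosterior

theorem contamPost_uniformly_B_robust_of_lipschitzWith {d p n : ℕ}
    (𝓧 : Set (EuclideanSpace ℝ (Fin d))) (Θ : Set (EuclideanSpace ℝ (Fin p)))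
    (X : Fin n → EuclideanSpace ℝ (Fin d))
    {ρ : EuclideanSpace ℝ (Fin d) → EuclideanSpace ℝ (Fin p) → ℝ} {K : ℝ≥0}
    (hρ : ∀ x θ, 0 ≤ ρ x θ) (hρK : ∀ x, LipschitzWith K (ρ x))
    {w : EuclideanSpace ℝ (Fin p) → ℝ} (hw : ∀ θ, 0 ≤ w θ)
    (hwbdd : ∃ M : ℝ, ∀ θ ∈ Θ, w θ ≤ M)
    (hwmom : IntegrableOn (fun θ => ‖θ‖ * w θ) Θ)
    (hwnormbdd : ∃ M : ℝ, ∀ θ ∈ Θ, w θ * ‖θ‖ ≤ M)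
    (hwell : ∀ ε ∈ Icc (0 : ℝ) 1, ∀ x₀ ∈ 𝓧,
      IntegrableOn (fun t => contamNum w ρ X x₀ ε t) Θ ∧ 0 < ∫ t in Θ, contamNum w ρ X x₀ ε t) :
    ∃ C : ℝ, ∀ θ ∈ Θ, ∀ x₀ ∈ 𝓧, ∃ pif : ℝ,
      HasDerivWithinAt (fun ε => contamPost Θ w ρ X x₀ ε θ) pif (Ici 0) 0 ∧ |pif| ≤ C := by
  obtain ⟨M, hM⟩ := hwbdd
  obtain ⟨M', hM'⟩ := hwnormbdd
  set F := fun t => w t * exp (-∑ i, ρ (X i) t)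
  refine ⟨(∑ _i : Fin n, (K + K) : ℝ≥0) * (M' * (∫ t in Θ, F t) + M * ∫ t in Θ, ‖t‖ * F t) /
    (∫ t in Θ, F t) ^ 2, fun θ hθ x₀ hx₀ => ?_⟩
  set h := fun t => ∑ i, (ρ (X i) t - ρ x₀ t)
  have hcontam : ∀ ε t, contamNum w ρ X x₀ ε t = F t * exp (ε * h t) :=
    contamNum_eq_mul_exp w ρ X x₀
  have hint : ∀ ε ∈ Icc (0 : ℝ) 1, IntegrableOn (fun t => F t * exp (ε * h t)) Θ := fun ε hε => by
    simpa only [hcontam] using (hwell ε hε x₀ hx₀).1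
  have hle : ∀ ε ∈ Icc (0 : ℝ) 1, ∀ t, F t * exp (ε * h t) ≤ w t := fun ε hε t =>
    hcontam ε t ▸ contamNum_le X x₀ (hw t) (fun x => hρ x t) hε
  have hmom : ∀ ε ∈ Icc (0 : ℝ) 1, IntegrableOn (fun t => ‖t‖ * (F t * exp (ε * h t))) Θ :=
    fun ε hε => hwmom.mono' (continuous_norm.aestronglyMeasurable.mul (hint ε hε).1)
      (ae_of_all _ fun t => by
        rw [norm_mul, norm_norm, Real.norm_of_nonneg
          (mul_nonneg (mul_nonneg (hw t) (exp_pos _).le) (exp_pos _).le)]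
        exact mul_le_mul_of_nonneg_left (hle ε hε t) (norm_nonneg t))
  have h0 : (0 : ℝ) ∈ Icc (0 : ℝ) 1 := left_mem_Icc.2 zero_le_one
  have h1 : (1 : ℝ) ∈ Icc (0 : ℝ) 1 := right_mem_Icc.2 zero_le_one
  have hFw : ∀ t, F t ≤ w t := fun t => by simpa using hle 0 h0 t
  have hFi : IntegrableOn F Θ := by simpa using hint 0 h0
  have hFpos : 0 < ∫ t in Θ, F t := by simpa [hcontam] using (hwell 0 h0 x₀ hx₀).2
  have hnF : IntegrableOn (fun t => ‖t‖ * F t) Θ := by simpa using hmom 0 h0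
  have hnF₁ : IntegrableOn (fun t => ‖t‖ * (F t * exp (h t))) Θ := by simpa using hmom 1 h1
  have hh : LipschitzWith (∑ _i : Fin n, (K + K)) h :=
    LipschitzWith.finset_sum fun i _ => (hρK (X i)).sub (hρK x₀)
  have hpost : (fun ε => contamPost Θ w ρ X x₀ ε θ)
      = fun ε => F θ * exp (ε * h θ) / ∫ t in Θ, F t * exp (ε * h t) := by
    funext ε
    simp only [contamPost, hcontam]
  rw [hpost]
  exact hh.exists_hasDerivWithinAt_mul_exp_div_integral_abs_le θ
    (fun t => mul_nonneg (hw t) (exp_pos _).le) hFi hFpos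
    (fun ε hε => hint ε (Ioc_subset_Icc_self hε)) hnF hnF₁ ((hFw θ).trans (hM θ hθ))
    ((mul_le_mul_of_nonneg_right (hFw θ) (norm_nonneg θ)).trans (hM' θ hθ))

theorem reweighted_posterior_uniformly_B_robust_general {d p n : ℕ}
    (𝓧 : Set (EuclideanSpace ℝ (Fin d))) (Θ : Set (EuclideanSpace ℝ (Fin p)))
    (X : Fin n → EuclideanSpace ℝ (Fin d))
    (g : EuclideanSpace ℝ (Fin d) → EuclideanSpace ℝ (Fin p) → ℝ)
    (hgpos : ∀ x θ, 0 < g x θ)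
    (Gg : EuclideanSpace ℝ (Fin d) → EuclideanSpace ℝ (Fin p) → EuclideanSpace ℝ (Fin p))
    (hGg : ∀ x θ, HasGradientAt (g x) (Gg x θ) θ)
    (L : NNReal) (hLip : ∀ x, LipschitzWith L (fun θ => Real.log (g x θ)))
    (κ lam : ℝ) (hκ : 0 < κ) (hlam : 0 < lam)
    (w : EuclideanSpace ℝ (Fin p) → ℝ) (hw : ∀ θ, 0 ≤ w θ)
    (hwbdd : ∃ M : ℝ, ∀ θ ∈ Θ, w θ ≤ M)
    (hwmom : IntegrableOn (fun θ => ‖θ‖ * w θ) Θ)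
    (hwnormbdd : ∃ M : ℝ, ∀ θ ∈ Θ, w θ * ‖θ‖ ≤ M)
    (hwell : ∀ ε ∈ Set.Icc (0 : ℝ) 1, ∀ x₀ ∈ 𝓧,
      IntegrableOn (fun t => contamNum w (reweightedLoss κ lam g) X x₀ ε t) Θ ∧
      0 < ∫ t in Θ, contamNum w (reweightedLoss κ lam g) X x₀ ε t) :
    (∀ x θ, HasGradientAt (fun t => reweightedLoss κ lam g x t)
        ((κ / (lam + g x θ)) • Gg x θ) θ ∧
      ‖(κ / (lam + g x θ)) • Gg x θ‖ ≤ κ * (L : ℝ)) ∧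
    ∃ C : ℝ, ∀ θ ∈ Θ, ∀ x₀ ∈ 𝓧, ∃ pif : ℝ,
      HasDerivWithinAt (fun ε => contamPost Θ w (reweightedLoss κ lam g) X x₀ ε θ)
        pif (Set.Ici 0) 0 ∧ |pif| ≤ C := by
  have hpos : ∀ x θ, 0 < lam + g x θ := fun x θ => add_pos hlam (hgpos x θ)
  have hscore : ∀ x θ, HasGradientAt (fun t => reweightedLoss κ lam g x t)
        ((κ / (lam + g x θ)) • Gg x θ) θ ∧ ‖(κ / (lam + g x θ)) • Gg x θ‖ ≤ κ * (L : ℝ) :=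
    fun x θ => ⟨(hGg x θ).const_mul_log_const_add_sub_log (hpos x θ) κ,
      (hGg x θ).norm_div_const_add_smul_le (hgpos x θ) (hLip x) hlam.le hκ.le⟩
  have hρK : ∀ x, LipschitzWith (κ.toNNReal * L) (reweightedLoss κ lam g x) := fun x =>
    lipschitzWith_of_hasGradientAt_of_norm_le (fun θ => (hscore x θ).1) fun θ => by
      simpa [Real.coe_toNNReal _ hκ.le] using (hscore x θ).2
  have hρ : ∀ x θ, 0 ≤ reweightedLoss κ lam g x θ := fun x θ =>
    mul_nonneg hκ.le (sub_nonneg.2 (log_le_log hlam (le_add_of_nonneg_right (hgpos x θ).le)))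
  exact ⟨hscore, contamPost_uniformly_B_robust_of_lipschitzWith 𝓧 Θ X hρ hρK hw hwbdd hwmom
    hwnormbdd hwell⟩

/-- **Uniform B-robustness of reweighted posteriors with Gamma weights.**
For the model `f(x|θ) = exp(−g(x,θ))` with `θ ↦ log g(x,θ)` being `L`-Lipschitz, the
reweighted posterior with `Γ(κ,λ)` weights is the M-posterior with loss
`ρ(x,θ) = κ[log(λ + g(x,θ)) − log λ]`, whose score is bounded by `κL`; with an upper-bounded
prior having finite first moment and `sup_θ π(θ)‖θ‖ < ∞`, it is uniformly B-robust. -/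
theorem reweighted_posterior_uniformly_B_robust {d p n : ℕ} (hn : 0 < n)
    (𝓧 : Set (EuclideanSpace ℝ (Fin d))) (Θ : Set (EuclideanSpace ℝ (Fin p)))
    (X : Fin n → EuclideanSpace ℝ (Fin d)) (hX : ∀ i, X i ∈ 𝓧)
    (g : EuclideanSpace ℝ (Fin d) → EuclideanSpace ℝ (Fin p) → ℝ)
    (hgpos : ∀ x θ, 0 < g x θ)
    (Gg : EuclideanSpace ℝ (Fin d) → EuclideanSpace ℝ (Fin p) → EuclideanSpace ℝ (Fin p))
    (hGg : ∀ x θ, HasGradientAt (g x) (Gg x θ) θ)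
    (L : NNReal) (hLip : ∀ x, LipschitzWith L (fun θ => Real.log (g x θ)))
    (κ lam : ℝ) (hκ : 0 < κ) (hlam : 0 < lam)
    (w : EuclideanSpace ℝ (Fin p) → ℝ) (hw : ∀ θ, 0 ≤ w θ)
    (hwbdd : ∃ M : ℝ, ∀ θ ∈ Θ, w θ ≤ M)
    (hwmom : IntegrableOn (fun θ => ‖θ‖ * w θ) Θ)
    (hwnormbdd : ∃ M : ℝ, ∀ θ ∈ Θ, w θ * ‖θ‖ ≤ M)
    (hwell : ∀ ε ∈ Set.Icc (0 : ℝ) 1, ∀ x₀ ∈ 𝓧,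
      IntegrableOn (fun t => contamNum w (reweightedLoss κ lam g) X x₀ ε t) Θ ∧
      0 < ∫ t in Θ, contamNum w (reweightedLoss κ lam g) X x₀ ε t) :
    (∀ x θ, HasGradientAt (fun t => reweightedLoss κ lam g x t)
        ((κ / (lam + g x θ)) • Gg x θ) θ ∧
      ‖(κ / (lam + g x θ)) • Gg x θ‖ ≤ κ * (L : ℝ)) ∧
    ∃ C : ℝ, ∀ θ ∈ Θ, ∀ x₀ ∈ 𝓧, ∃ pif : ℝ,
      HasDerivWithinAt (fun ε => contamPost Θ w (reweightedLoss κ lam g) X x₀ ε θ)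
        pif (Set.Ici 0) 0 ∧ |pif| ≤ C :=
  reweighted_posterior_uniformly_B_robust_general 𝓧 Θ X g hgpos Gg hGg L hLip κ lam hκ hlam w hw
    hwbdd hwmom hwnormbdd hwell
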